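/- arXiv:2603.13509 — 2 statements merged into one kernel-verified Lean document; each statement's English description precedes it below -/
import Mathlib

section
/- Let b : ℝⁿ → ℝ be continuously differentiable, let F : ℝⁿ → ℝⁿ be locally Lipschitz, let x : [0,T] → ℝⁿ satisfy ẋ(t) = F(x(t)) with b(x(0)) ≥ 0, and suppose ∇b(x(t)) · F(x(t)) ≥ −κ·b(x(t)) for all t ∈ [0,T], where κ > 0. Then b(x(t)) ≥ 0 for all t ∈ [0,T]. -/
open Set Real

/-- Multiplying by the integrating factor `exp (κ t)` turns the differential inequality
`f' ≥ -κ f` into `(exp (κ t) * f t)' ≥ 0`. -/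
theorem monotoneOn_exp_mul_of_hasDerivAt_ge {f f' : ℝ → ℝ} {κ a c : ℝ}
    (hf : ∀ t ∈ Icc a c, HasDerivAt f (f' t) t) (hf' : ∀ t ∈ Icc a c, -κ * f t ≤ f' t) :
    MonotoneOn (fun t => exp (κ * t) * f t) (Icc a c) := by
  have hderiv : ∀ t ∈ Icc a c,
      HasDerivAt (fun t => exp (κ * t) * f t) (exp (κ * t) * (κ * f t + f' t)) t := by
    intro t ht
    have hexp : HasDerivAt (fun s => exp (κ * s)) (exp (κ * t) * κ) t := by
      simpa using ((hasDerivAt_id t).const_mul κ).exp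
    exact (hexp.mul (hf t ht)).congr_deriv (by ring)
  refine monotoneOn_of_hasDerivWithinAt_nonneg (convex_Icc a c)
    (fun t ht => (hderiv t ht).continuousAt.continuousWithinAt)
    (fun t ht => (hderiv t (interior_subset ht)).hasDerivWithinAt) fun t ht => ?_
  have ht' := interior_subset ht
  exact mul_nonneg (exp_pos _).le (by linarith [hf' t ht'])

theorem nonneg_of_hasDerivAt_ge_neg_mul {f f' : ℝ → ℝ} {κ a c : ℝ}
    (hf : ∀ t ∈ Icc a c, HasDerivAt f (f' t) t) (hf' : ∀ t ∈ Icc a c, -κ * f t ≤ f' t)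
    (ha : 0 ≤ f a) : ∀ t ∈ Icc a c, 0 ≤ f t := by
  intro t ht
  have hmono := monotoneOn_exp_mul_of_hasDerivAt_ge hf hf' (left_mem_Icc.2 (ht.1.trans ht.2))
    ht ht.1
  have hprod : 0 ≤ exp (κ * t) * f t := (mul_nonneg (exp_pos _).le ha).trans hmono
  exact nonneg_of_mul_nonneg_right hprod (exp_pos _)

theorem cbf_safety_general {n : ℕ} {T κ : ℝ}
    (b : (Fin n → ℝ) → ℝ) (hb : ContDiff ℝ 1 b)
    (F : (Fin n → ℝ) → (Fin n → ℝ))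
    (x : ℝ → (Fin n → ℝ))
    (hx : ∀ t ∈ Set.Icc (0:ℝ) T, HasDerivAt x (F (x t)) t)
    (h0 : 0 ≤ b (x 0))
    (hcbf : ∀ t ∈ Set.Icc (0:ℝ) T, fderiv ℝ b (x t) (F (x t)) ≥ -κ * b (x t)) :
    ∀ t ∈ Set.Icc (0:ℝ) T, 0 ≤ b (x t) := by
  have hbx : ∀ t ∈ Icc 0 T, HasDerivAt (fun s => b (x s)) (fderiv ℝ b (x t) (F (x t))) t :=
    fun t ht => ((hb.differentiable one_ne_zero (x t)).hasFDerivAt).comp_hasDerivAt t (hx t ht)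
  exact nonneg_of_hasDerivAt_ge_neg_mul hbx hcbf h0

/-- Safety via CBFs along a closed-loop trajectory: if `b(x(0)) ≥ 0` and the CBF
inequality `∇b(x(t))·F(x(t)) ≥ −κ b(x(t))` holds on `[0,T]`, then `b(x(t)) ≥ 0`
on `[0,T]`. -/
theorem cbf_safety {n : ℕ} {T κ : ℝ} (hT : 0 ≤ T) (hκ : 0 < κ)
    (b : (Fin n → ℝ) → ℝ) (hb : ContDiff ℝ 1 b)
    (F : (Fin n → ℝ) → (Fin n → ℝ)) (hF : LocallyLipschitz F)
    (x : ℝ → (Fin n → ℝ))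
    (hx : ∀ t ∈ Set.Icc (0:ℝ) T, HasDerivAt x (F (x t)) t)
    (h0 : 0 ≤ b (x 0))
    (hcbf : ∀ t ∈ Set.Icc (0:ℝ) T, fderiv ℝ b (x t) (F (x t)) ≥ -κ * b (x t)) :
    ∀ t ∈ Set.Icc (0:ℝ) T, 0 ≤ b (x t) :=
  cbf_safety_general b hb F x hx h0 hcbf
end

section
/- Let f : ℝⁿ → ℝⁿ be a smooth vector field and h : ℝⁿ → ℝ smooth. Define ψ₀ = h and ψ_i = L_f ψ_{i−1} + κ_i ψ_{i−1} for i = 1, …, r−1, with constants κ_i > 0. Suppose x : [0,∞) → ℝⁿ solves ẋ = f(x), and that ψ_i(x(0)) ≥ 0 for i = 0, …, r−1, and L_f ψ_{r−1}(x(t)) + κ_r ψ_{r−1}(x(t)) ≥ 0 for all t ≥ 0. Then ψ_i(x(t)) ≥ 0 for all i = 0, …, r−1 and all t ≥ 0; in particular h(x(t)) ≥ 0 for all t ≥ 0. -/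
/-- Comparison lemma: if `y' + κ y ≥ 0` on `[0,∞)` and `y 0 ≥ 0`, then `y ≥ 0` on `[0,∞)`. -/
lemma hocbf_comp_lemma (κ : ℝ) (y y' : ℝ → ℝ)
    (hy : ∀ t : ℝ, 0 ≤ t → HasDerivAt y (y' t) t)
    (hy' : ∀ t : ℝ, 0 ≤ t → 0 ≤ y' t + κ * y t)
    (h0 : 0 ≤ y 0) : ∀ t : ℝ, 0 ≤ t → 0 ≤ y t := by
  set g : ℝ → ℝ := fun t => y t * Real.exp (κ * t) with hg
  have hgd : ∀ t : ℝ, 0 ≤ t → HasDerivAt g ((y' t + κ * y t) * Real.exp (κ * t)) t := by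
    intro t ht
    have he : HasDerivAt (fun t => Real.exp (κ * t)) (κ * Real.exp (κ * t)) t := by
      have := (Real.hasDerivAt_exp (κ * t)).comp t ((hasDerivAt_id t).const_mul κ)
      simpa [mul_comm, Function.comp_def] using this
    have : HasDerivAt (fun t => y t * Real.exp (κ * t)) _ t := (hy t ht).mul he
    convert this using 1
    ring
  have hmono : MonotoneOn g (Set.Ici (0:ℝ)) := by
    apply monotoneOn_of_deriv_nonneg (convex_Ici 0)
    · intro t ht
      exact ((hy t ht).continuousAt.mul
        (((Real.continuous_exp).comp
          (continuous_const.mul continuous_id)).continuousAt)).continuousWithinAt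
    · intro t ht
      rw [interior_Ici] at ht
      exact ((hgd t (le_of_lt ht)).differentiableAt).differentiableWithinAt
    · intro t ht
      rw [interior_Ici] at ht
      rw [(hgd t (le_of_lt ht)).deriv]
      exact mul_nonneg (hy' t (le_of_lt ht)) (Real.exp_pos _).le
  intro t ht
  have := hmono (Set.self_mem_Ici) (Set.mem_Ici.mpr ht) ht
  simp only [hg, mul_zero, Real.exp_zero, mul_one] at this
  have hpos := Real.exp_pos (κ * t)
  nlinarith [h0.trans this]

/-- Lie derivative `L_f ψ (x) = ∇ψ(x) · f(x)`. -/
noncomputable def lieDeriv {n : ℕ} (f : (Fin n → ℝ) → (Fin n → ℝ))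
    (ψ : (Fin n → ℝ) → ℝ) : (Fin n → ℝ) → ℝ :=
  fun x => fderiv ℝ ψ x (f x)

/-- The HOCBF hierarchy `ψ₀ = h`, `ψ_i = L_f ψ_{i−1} + κ_i ψ_{i−1}`. -/
noncomputable def hocbfPsi {n : ℕ} (f : (Fin n → ℝ) → (Fin n → ℝ))
    (h : (Fin n → ℝ) → ℝ) (κ : ℕ → ℝ) : ℕ → ((Fin n → ℝ) → ℝ)
  | 0 => h
  | i + 1 => fun x => lieDeriv f (hocbfPsi f h κ i) x + κ (i + 1) * hocbfPsi f h κ i x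

lemma lieDeriv_contDiff {n : ℕ} {f : (Fin n → ℝ) → (Fin n → ℝ)} {ψ : (Fin n → ℝ) → ℝ}
    (hf : ContDiff ℝ (⊤ : ℕ∞) f) (hψ : ContDiff ℝ (⊤ : ℕ∞) ψ) : ContDiff ℝ (⊤ : ℕ∞) (lieDeriv f ψ) :=
  (hψ.fderiv_right (by simp)).clm_apply hf

lemma hocbfPsi_contDiff {n : ℕ} {f : (Fin n → ℝ) → (Fin n → ℝ)} {h : (Fin n → ℝ) → ℝ}
    (κ : ℕ → ℝ) (hf : ContDiff ℝ (⊤ : ℕ∞) f) (hh : ContDiff ℝ (⊤ : ℕ∞) h) (i : ℕ) :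
    ContDiff ℝ (⊤ : ℕ∞) (hocbfPsi f h κ i) := by
  induction i with
  | zero => exact hh
  | succ i ih => exact (lieDeriv_contDiff hf ih).add (contDiff_const.mul ih)

/-- High-order CBF safety: if `ψ_i(x(0)) ≥ 0` for `i = 0, …, r−1` and the top-level
HOCBF condition holds for all `t ≥ 0`, then `ψ_i(x(t)) ≥ 0` for all hierarchy levels
and all `t ≥ 0`; in particular `h(x(t)) ≥ 0`. -/
theorem hocbf_safety {n : ℕ} (r : ℕ) (hr : 1 ≤ r)
    (f : (Fin n → ℝ) → (Fin n → ℝ)) (hf : ContDiff ℝ (⊤ : ℕ∞) f)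
    (h : (Fin n → ℝ) → ℝ) (hh : ContDiff ℝ (⊤ : ℕ∞) h)
    (κ : ℕ → ℝ) (hκ : ∀ i : ℕ, 1 ≤ i → i ≤ r → 0 < κ i)
    (x : ℝ → (Fin n → ℝ))
    (hx : ∀ t : ℝ, 0 ≤ t → HasDerivAt x (f (x t)) t)
    (hinit : ∀ i : ℕ, i + 1 ≤ r → 0 ≤ hocbfPsi f h κ i (x 0))
    (htop : ∀ t : ℝ, 0 ≤ t →
      0 ≤ lieDeriv f (hocbfPsi f h κ (r - 1)) (x t) + κ r * hocbfPsi f h κ (r - 1) (x t)) :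
    (∀ i : ℕ, i + 1 ≤ r → ∀ t : ℝ, 0 ≤ t → 0 ≤ hocbfPsi f h κ i (x t)) ∧
    (∀ t : ℝ, 0 ≤ t → 0 ≤ h (x t)) := by
  have hsmooth : ∀ i, ContDiff ℝ (⊤ : ℕ∞) (hocbfPsi f h κ i) := hocbfPsi_contDiff κ hf hh
  have hderiv : ∀ (i : ℕ) (t : ℝ), 0 ≤ t →
      HasDerivAt (fun s => hocbfPsi f h κ i (x s)) (lieDeriv f (hocbfPsi f h κ i) (x t)) t := by
    intro i t ht
    have hF : HasFDerivAt (hocbfPsi f h κ i) (fderiv ℝ (hocbfPsi f h κ i) (x t)) (x t) :=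
      ((hsmooth i).differentiable (by simp) (x t)).hasFDerivAt
    exact hF.comp_hasDerivAt t (hx t ht)
  have key : ∀ i : ℕ,
      (∀ t : ℝ, 0 ≤ t →
        0 ≤ lieDeriv f (hocbfPsi f h κ i) (x t) + κ (i + 1) * hocbfPsi f h κ i (x t)) →
      0 ≤ hocbfPsi f h κ i (x 0) → ∀ t : ℝ, 0 ≤ t → 0 ≤ hocbfPsi f h κ i (x t) := by
    intro i hcond h0
    exact hocbf_comp_lemma (κ (i + 1)) _ _ (hderiv i) hcond h0
  have main : ∀ d i : ℕ, i + 1 + d = r → ∀ t : ℝ, 0 ≤ t → 0 ≤ hocbfPsi f h κ i (x t) := by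
    intro d
    induction d with
    | zero =>
      intro i hi
      have hi1 : r - 1 = i := by omega
      have hi2 : r = i + 1 := by omega
      refine key i ?_ (hinit i (by omega))
      intro t ht
      have := htop t ht
      rwa [hi1, hi2] at this
    | succ d ih =>
      intro i hi
      have hnext := ih (i + 1) (by omega)
      refine key i ?_ (hinit i (by omega))
      intro t ht
      have := hnext t ht
      simpa [hocbfPsi] using this
  refine ⟨fun i hi => main (r - (i + 1)) i (by omega), ?_⟩
  have := main (r - 1) 0 (by omega)
  simpa [hocbfPsi] using this
end
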